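/- Let ℓ : ℝ^m → ℝ be differentiable with L-Lipschitz gradient, let z' ∈ ℝ^m, γ > L, and define φ_γ(z') = sup_{z ∈ ℝ^m} [ℓ(z) - (γ/2)‖z - z'‖²]. Then ℓ(z') + ‖∇ℓ(z')‖²/(2(γ+L)) ≤ φ_γ(z') ≤ ℓ(z') + ‖∇ℓ(z')‖²/(2(γ-L)). -/

import Mathlib

open scoped RealInnerProductSpace

variable {F : Type*} [NormedAddCommGroup F] [InnerProductSpace ℝ F] [CompleteSpace F]

lemma line_deriv (ℓ : F → ℝ) (hdiff : Differentiable ℝ ℓ) (z' d : F) (t : ℝ) :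
    HasDerivAt (fun s : ℝ => ℓ (z' + s • d)) ⟪gradient ℓ (z' + t • d), d⟫ t := by
  have hc : HasDerivAt (fun s : ℝ => z' + s • d) d t := by
    simpa using ((hasDerivAt_id t).smul_const d).const_add z'
  have hf := ((hdiff (z' + t • d)).hasGradientAt).hasFDerivAt
  have := hf.comp_hasDerivAt t hc
  simpa [InnerProductSpace.toDual_apply_apply, Function.comp_def] using this

lemma quad_bound (ℓ : F → ℝ) (L : ℝ) (hL : 0 ≤ L) (hdiff : Differentiable ℝ ℓ)
    (hlip : ∀ a b : F, ‖gradient ℓ a - gradient ℓ b‖ ≤ L * ‖a - b‖) (z' z : F) :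
    |ℓ z - ℓ z' - ⟪gradient ℓ z', z - z'⟫| ≤ L / 2 * ‖z - z'‖ ^ 2 := by
  set d := z - z' with hd
  set g := gradient ℓ z' with hg
  have hder : ∀ t : ℝ, HasDerivAt (fun s : ℝ => ℓ (z' + s • d)) ⟪gradient ℓ (z' + t • d), d⟫ t :=
    line_deriv ℓ hdiff z' d
  have hbnd : ∀ t ∈ Set.Icc (0:ℝ) 1, |⟪gradient ℓ (z' + t • d), d⟫ - ⟪g, d⟫| ≤ L * t * ‖d‖ ^ 2 := by
    intro t ht
    rw [← inner_sub_left]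
    calc |⟪gradient ℓ (z' + t • d) - g, d⟫| ≤ ‖gradient ℓ (z' + t • d) - g‖ * ‖d‖ :=
          abs_real_inner_le_norm _ _
      _ ≤ (L * ‖(z' + t • d) - z'‖) * ‖d‖ := by gcongr; exact hlip _ _
      _ = L * t * ‖d‖ ^ 2 := by
          have h : (z' + t • d) - z' = t • d := by abel
          rw [h, norm_smul, Real.norm_eq_abs, abs_of_nonneg ht.1]; ring
  have hFd : ∀ c : ℝ, ∀ t : ℝ, HasDerivAt
      (fun s : ℝ => ℓ (z' + s • d) - s * ⟪g, d⟫ - c * s ^ 2 * ‖d‖ ^ 2)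
      (⟪gradient ℓ (z' + t • d), d⟫ - ⟪g, d⟫ - c * (2 * t) * ‖d‖ ^ 2) t := by
    intro c t
    have h1 := (hder t).sub ((hasDerivAt_id t).mul_const ⟪g, d⟫)
    have h2 : HasDerivAt (fun s : ℝ => c * s ^ 2 * ‖d‖ ^ 2) (c * (2 * t) * ‖d‖ ^ 2) t := by
      have := ((hasDerivAt_pow 2 t).const_mul c).mul_const (‖d‖ ^ 2)
      exact this.congr_deriv (by push_cast; ring)
    have h3 := h1.sub h2
    simp only [one_mul] at h3
    exact h3
  have hcont : ∀ c : ℝ, ContinuousOn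
      (fun s : ℝ => ℓ (z' + s • d) - s * ⟪g, d⟫ - c * s ^ 2 * ‖d‖ ^ 2) (Set.Icc 0 1) := by
    intro c
    apply Continuous.continuousOn
    have : Continuous fun s : ℝ => ℓ (z' + s • d) :=
      hdiff.continuous.comp (by continuity)
    continuity
  -- upper
  have hup : ℓ z - ℓ z' - ⟪g, d⟫ ≤ L / 2 * ‖d‖ ^ 2 := by
    have hanti : AntitoneOn (fun s : ℝ => ℓ (z' + s • d) - s * ⟪g, d⟫ - (L/2) * s ^ 2 * ‖d‖ ^ 2)
        (Set.Icc (0:ℝ) 1) := by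
      apply antitoneOn_of_deriv_nonpos (convex_Icc 0 1) (hcont _)
      · intro t ht; exact ((hFd _ t).differentiableAt).differentiableWithinAt
      · intro t ht
        rw [interior_Icc] at ht
        rw [(hFd _ t).deriv]
        have := hbnd t ⟨le_of_lt ht.1, le_of_lt ht.2⟩
        have h2 := (abs_le.mp this).2
        nlinarith [this, abs_nonneg (⟪gradient ℓ (z' + t • d), d⟫ - ⟪g, d⟫)]
    have h01 := hanti (Set.left_mem_Icc.mpr zero_le_one) (Set.right_mem_Icc.mpr zero_le_one) zero_le_one
    simp only [zero_smul, add_zero, one_smul, zero_mul, one_mul, zero_pow, one_pow] at h01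
    have hz : z' + d = z := by rw [hd]; abel
    rw [hz] at h01
    linarith [h01]
  -- lower
  have hlo : -(L / 2 * ‖d‖ ^ 2) ≤ ℓ z - ℓ z' - ⟪g, d⟫ := by
    have hmono : MonotoneOn (fun s : ℝ => ℓ (z' + s • d) - s * ⟪g, d⟫ - (-(L/2)) * s ^ 2 * ‖d‖ ^ 2)
        (Set.Icc (0:ℝ) 1) := by
      apply monotoneOn_of_deriv_nonneg (convex_Icc 0 1) (hcont _)
      · intro t ht; exact ((hFd _ t).differentiableAt).differentiableWithinAt
      · intro t ht
        rw [interior_Icc] at ht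
        rw [(hFd _ t).deriv]
        have := hbnd t ⟨le_of_lt ht.1, le_of_lt ht.2⟩
        have h1 := (abs_le.mp this).1
        nlinarith
    have h01 := hmono (Set.left_mem_Icc.mpr zero_le_one) (Set.right_mem_Icc.mpr zero_le_one) zero_le_one
    simp only [zero_smul, add_zero, one_smul, zero_mul, one_mul, zero_pow, one_pow] at h01
    have hz : z' + d = z := by rw [hd]; abel
    rw [hz] at h01
    linarith [h01]
  rw [abs_le]; constructor <;> linarith

/-- Two-sided bound of the surrogate robustness loss: if `ℓ` is differentiable with
`L`-Lipschitz gradient and `γ > L`, then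
`ℓ(z') + ‖∇ℓ(z')‖²/(2(γ+L)) ≤ sup_z [ℓ(z) - (γ/2)‖z-z'‖²] ≤ ℓ(z') + ‖∇ℓ(z')‖²/(2(γ-L))`. -/
theorem stmt_6 {m : ℕ} (ℓ : EuclideanSpace ℝ (Fin m) → ℝ)
    (L γ : ℝ) (hL : 0 ≤ L) (hγ : L < γ)
    (hdiff : Differentiable ℝ ℓ)
    (hlip : ∀ a b : EuclideanSpace ℝ (Fin m),
      ‖gradient ℓ a - gradient ℓ b‖ ≤ L * ‖a - b‖)
    (z' : EuclideanSpace ℝ (Fin m)) :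
    ℓ z' + ‖gradient ℓ z'‖ ^ 2 / (2 * (γ + L)) ≤
      sSup (Set.range (fun z : EuclideanSpace ℝ (Fin m) => ℓ z - γ / 2 * ‖z - z'‖ ^ 2)) ∧
    sSup (Set.range (fun z : EuclideanSpace ℝ (Fin m) => ℓ z - γ / 2 * ‖z - z'‖ ^ 2)) ≤
      ℓ z' + ‖gradient ℓ z'‖ ^ 2 / (2 * (γ - L)) := by
  have hkey := quad_bound ℓ L hL hdiff hlip z'
  have hγL : (0:ℝ) < γ - L := by linarith
  have hγL' : (0:ℝ) < γ + L := by linarith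
  have hub : ∀ z : EuclideanSpace ℝ (Fin m),
      ℓ z - γ / 2 * ‖z - z'‖ ^ 2 ≤ ℓ z' + ‖gradient ℓ z'‖ ^ 2 / (2 * (γ - L)) := by
    intro z
    have h1 := (abs_le.mp (hkey z)).2
    have h2 : ⟪gradient ℓ z', z - z'⟫ ≤ ‖gradient ℓ z'‖ * ‖z - z'‖ :=
      real_inner_le_norm _ _
    have h4 : 0 < 2 * (γ - L) := by linarith
    have h5 : ‖gradient ℓ z'‖ * ‖z - z'‖ - (γ - L) / 2 * ‖z - z'‖ ^ 2 ≤
        ‖gradient ℓ z'‖ ^ 2 / (2 * (γ - L)) := by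
      rw [le_div_iff₀ h4]
      nlinarith [sq_nonneg (‖gradient ℓ z'‖ - (γ - L) * ‖z - z'‖)]
    linarith
  have hbdd : BddAbove (Set.range (fun z : EuclideanSpace ℝ (Fin m) =>
      ℓ z - γ / 2 * ‖z - z'‖ ^ 2)) := ⟨_, by rintro x ⟨z, rfl⟩; exact hub z⟩
  constructor
  · set z₀ : EuclideanSpace ℝ (Fin m) := z' + (γ + L)⁻¹ • gradient ℓ z' with hz₀
    have hd : z₀ - z' = (γ + L)⁻¹ • gradient ℓ z' := by rw [hz₀]; abel
    have hval : ℓ z' + ‖gradient ℓ z'‖ ^ 2 / (2 * (γ + L)) ≤ ℓ z₀ - γ / 2 * ‖z₀ - z'‖ ^ 2 := by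
      have h1 := (abs_le.mp (hkey z₀)).1
      have hin : ⟪gradient ℓ z', z₀ - z'⟫ = (γ + L)⁻¹ * ‖gradient ℓ z'‖ ^ 2 := by
        rw [hd, real_inner_smul_right, real_inner_self_eq_norm_sq]
      have hnd : ‖z₀ - z'‖ ^ 2 = ((γ + L)⁻¹) ^ 2 * ‖gradient ℓ z'‖ ^ 2 := by
        rw [hd, norm_smul, mul_pow, Real.norm_eq_abs, sq_abs]
      rw [hin, hnd] at h1
      rw [hnd]
      have hne : γ + L ≠ 0 := ne_of_gt hγL'
      have heq : (γ + L)⁻¹ * ‖gradient ℓ z'‖ ^ 2 - L / 2 * (((γ + L)⁻¹) ^ 2 * ‖gradient ℓ z'‖ ^ 2)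
          - γ / 2 * (((γ + L)⁻¹) ^ 2 * ‖gradient ℓ z'‖ ^ 2)
          = ‖gradient ℓ z'‖ ^ 2 / (2 * (γ + L)) := by
        field_simp
        ring
      linarith
    exact le_trans hval (le_csSup hbdd ⟨z₀, rfl⟩)
  · exact csSup_le ⟨_, ⟨z', rfl⟩⟩ (by rintro x ⟨z, rfl⟩; exact hub z)
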